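/- arXiv:1201.5992 — 3 statements merged into one kernel-verified Lean document; each statement's English description precedes it below -/
import Mathlib

section
/- Let U ⊆ F_q³ be a set of q² − 2 points that does not determine the points of C. If the line at infinity l(y,z,w) meets C (for some nonzero (y,z,w) ∈ F_q³), then for every x ∈ F_q the affine plane π(x,y,z,w) contains at most q points of U, i.e. |π(x,y,z,w) ∩ U| ≤ q. -/
/-- The dot product on `F³`. -/
def dot3 {F : Type*} [Field F] (u v : F × F × F) : F :=
  u.1 * v.1 + u.2.1 * v.2.1 + u.2.2 * v.2.2

/-- The nondegenerate quadratic form `Q(t₀,t₁,t₂) = t₁² − t₀t₂` defining the conic `C`. -/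
def quadQ {F : Type*} [Field F] (t : F × F × F) : F :=
  t.2.1 ^ 2 - t.1 * t.2.2

/-- `U` does not determine the points of the conic `C`:
`Q(u − u') ≠ 0` for all distinct `u, u' ∈ U`. -/
def NoDetermine {F : Type*} [Field F] (U : Finset (F × F × F)) : Prop :=
  ∀ u ∈ U, ∀ u' ∈ U, u ≠ u' → quadQ (u - u') ≠ 0

/-- The line at infinity `l(y,z,w)` meets the conic `C`. -/
def MeetsConic {F : Type*} [Field F] (v : F × F × F) : Prop :=
  ∃ t : F × F × F, t ≠ 0 ∧ quadQ t = 0 ∧ dot3 v t = 0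


/-! The plane `π` is a translate of the plane `v⊥ = ker (v · _)`, which contains the isotropic
direction `t`. Two points of `U` never differ by a multiple of `t`, since `Q(c • t) = c² Q(t) = 0`,
so `π ∩ U` meets each of the `q` lines of `π` parallel to `t` at most once; these lines are the
points of the one-dimensional quotient `v⊥ / ⟨t⟩`. -/

open Module Submodule

theorem Finset.card_le_natCard_quotient_comap_subtype {R V : Type*} [Ring R] [AddCommGroup V]
    [Module R V] [Finite V] {W K : Submodule R V} {S : Finset V}
    (hW : ∀ a ∈ S, ∀ b ∈ S, a - b ∈ W) (hK : ∀ a ∈ S, ∀ b ∈ S, a - b ∈ K → a = b) :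
    S.card ≤ Nat.card (W ⧸ K.comap W.subtype) := by
  rcases S.eq_empty_or_nonempty with rfl | ⟨a₀, ha₀⟩
  · simp
  let φ : S → W ⧸ K.comap W.subtype := fun a => Submodule.Quotient.mk ⟨a - a₀, hW a a.2 a₀ ha₀⟩
  have hφ : Function.Injective φ := by
    rintro ⟨a, ha⟩ ⟨b, hb⟩ hab
    rw [Submodule.Quotient.eq] at hab
    simpa using hK a ha b hb (by simpa using hab)
  have : Finite (W ⧸ K.comap W.subtype) := Finite.of_surjective _ (mkQ_surjective _)
  simpa using Nat.card_le_card_of_injective φ hφ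

theorem natCard_quotient_comap_span_singleton {K V : Type*} [Field K] [Finite K] [AddCommGroup V]
    [Module K V] {W : Submodule K V} [FiniteDimensional K W] {t : V} (ht : t ≠ 0) (htW : t ∈ W) :
    Nat.card (W ⧸ (K ∙ t).comap W.subtype) = Nat.card K ^ (finrank K W - 1) := by
  have hspan : finrank K ((K ∙ t).comap W.subtype) = 1 := by
    rw [(comapSubtypeEquivOfLe ((span_singleton_le_iff_mem t W).mpr htW)).finrank_eq,
      finrank_span_singleton ht]
  have := ((K ∙ t).comap W.subtype).finrank_quotient_add_finrank
  rw [natCard_eq_pow_finrank (K := K)]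
  congr 1
  omega

section Dot3

variable {F : Type*} [Field F]

def dot3Dual (v : F × F × F) : Dual F (F × F × F) where
  toFun := dot3 v
  map_add' a b := by simp only [dot3, Prod.fst_add, Prod.snd_add]; ring
  map_smul' c a := by simp only [dot3, Prod.smul_fst, Prod.smul_snd, smul_eq_mul,
    RingHom.id_apply]; ring

theorem dot3Dual_apply (v a : F × F × F) : dot3Dual v a = dot3 v a := rfl

theorem dot3Dual_ne_zero {v : F × F × F} (hv : v ≠ 0) : dot3Dual v ≠ 0 := by
  contrapose! hv
  have h := LinearMap.congr_fun hv
  have h₀ := h (1, 0, 0)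
  have h₁ := h (0, 1, 0)
  have h₂ := h (0, 0, 1)
  simp only [dot3Dual_apply, dot3, LinearMap.zero_apply] at h₀ h₁ h₂
  ext <;> simp_all

theorem finrank_ker_dot3Dual {v : F × F × F} (hv : v ≠ 0) :
    finrank F (LinearMap.ker (dot3Dual v)) = 2 := by
  have := Dual.finrank_ker_add_one_of_ne_zero (dot3Dual_ne_zero hv)
  simp only [finrank_prod, finrank_self] at this
  omega

theorem quadQ_smul (c : F) (t : F × F × F) : quadQ (c • t) = c ^ 2 * quadQ t := by
  simp only [quadQ, Prod.smul_fst, Prod.smul_snd, smul_eq_mul]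
  ring

theorem NoDetermine.eq_of_sub_mem_span_singleton {U : Finset (F × F × F)} (hU : NoDetermine U)
    {t : F × F × F} (hQt : quadQ t = 0) {a b : F × F × F} (ha : a ∈ U) (hb : b ∈ U)
    (hab : a - b ∈ F ∙ t) : a = b := by
  obtain ⟨c, hc⟩ := mem_span_singleton.mp hab
  by_contra hne
  exact hU a ha b hb hne (by rw [← hc, quadQ_smul, hQt, mul_zero])

end Dot3

theorem stmt_0_general
    {F : Type*} [Field F] [Fintype F] [DecidableEq F]
    (U : Finset (F × F × F))
    (hU : NoDetermine U)
    (v : F × F × F) (hv : v ≠ 0) (hmeet : MeetsConic v)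
    (x : F) :
    (U.filter (fun a => dot3 v a + x = 0)).card ≤ Fintype.card F := by
  obtain ⟨t, ht, hQt, hvt⟩ := hmeet
  set S := U.filter (fun a => dot3 v a + x = 0)
  have hplane : ∀ a ∈ S, ∀ b ∈ S, a - b ∈ LinearMap.ker (dot3Dual v) := by
    intro a ha b hb
    rw [Finset.mem_filter] at ha hb
    rw [LinearMap.mem_ker, map_sub, dot3Dual_apply, dot3Dual_apply]
    linear_combination ha.2 - hb.2
  have hline : ∀ a ∈ S, ∀ b ∈ S, a - b ∈ F ∙ t → a = b := fun a ha b hb =>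
    hU.eq_of_sub_mem_span_singleton hQt (Finset.mem_filter.mp ha).1 (Finset.mem_filter.mp hb).1
  calc S.card ≤ _ := Finset.card_le_natCard_quotient_comap_subtype hplane hline
    _ = Fintype.card F := by
      rw [natCard_quotient_comap_span_singleton ht hvt, finrank_ker_dot3Dual hv,
        Nat.card_eq_fintype_card, pow_one]

theorem stmt_0 {p h : ℕ} (hp : p.Prime) (hodd : Odd p) (hh : 1 ≤ h)
    {F : Type*} [Field F] [Fintype F] [DecidableEq F]
    (hcard : Fintype.card F = p ^ h)
    (U : Finset (F × F × F))
    (hUcard : U.card = Fintype.card F ^ 2 - 2)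
    (hU : NoDetermine U)
    (v : F × F × F) (hv : v ≠ 0) (hmeet : MeetsConic v)
    (x : F) :
    (U.filter (fun a => dot3 v a + x = 0)).card ≤ Fintype.card F :=
  stmt_0_general U hU v hv hmeet x
end

section
/- Let U ⊆ F_q³ be a set of q² − 2 points that does not determine the points of C, and suppose the line at infinity l(y,z,w) meets C for the nonzero triple (y,z,w) ∈ F_q³. Then the Rédei polynomial R(X) = ∏_{u ∈ U} (X + u·(y,z,w)) divides (X^q − X)^q in F_q[X]. -/
/-- `σ_i(y,z,w)`: the `i`-th elementary symmetric function of the multiset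
`{u·(y,z,w) : u ∈ U}`. -/
def sigmaU {F : Type*} [Field F] (U : Finset (F × F × F)) (v : F × F × F) (i : ℕ) : F :=
  (U.val.map (fun u => dot3 u v)).esymm i

open Finset Polynomial

section Conic

variable {F : Type*} [Field F]

lemma dot3_sub_left (u u' v : F × F × F) : dot3 (u - u') v = dot3 u v - dot3 u' v := by
  simp only [dot3, Prod.fst_sub, Prod.snd_sub]; ring

lemma MeetsConic.exists_forall_quadQ_eq_zero {v : F × F × F} (hv : v ≠ 0)
    (hmeet : MeetsConic v) :
    ∃ w : F × F × F, ∀ d, dot3 d v = 0 → dot3 d w = 0 → quadQ d = 0 := by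
  obtain ⟨⟨t₀, t₁, t₂⟩, ht, hQt, hvt⟩ := hmeet
  obtain ⟨v₀, v₁, v₂⟩ := v
  simp only [quadQ, dot3] at hQt hvt ⊢
  by_cases hv₂ : v₂ = 0
  · -- `t` may be replaced by `(0, 0, 1)`, which is isotropic and orthogonal to `v`
    subst hv₂
    suffices ∃ w : F × F × F, ∀ d : F × F × F, d.1 * v₀ + d.2.1 * v₁ = 0 →
        d.1 * w.1 + d.2.1 * w.2.1 + d.2.2 * w.2.2 = 0 → d.1 = 0 ∧ d.2.1 = 0 by
      obtain ⟨w, hw⟩ := this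
      refine ⟨w, fun d hdv hdw => ?_⟩
      obtain ⟨h₀, h₁⟩ := hw d (by simpa using hdv) hdw
      rw [h₀, h₁]; ring
    by_cases hv₁ : v₁ = 0
    · have hv₀ : v₀ ≠ 0 := fun hv₀ => hv (by simp [hv₀, hv₁])
      refine ⟨(0, 1, 0), fun d hdv hdw => ?_⟩
      have h₁ : d.2.1 = 0 := by simpa using hdw
      exact ⟨(mul_eq_zero.1 (by simpa [hv₁] using hdv)).resolve_right hv₀, h₁⟩
    · refine ⟨(1, 0, 0), fun d hdv hdw => ?_⟩
      have h₀ : d.1 = 0 := by simpa using hdw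
      exact ⟨h₀, (mul_eq_zero.1 (by simpa [h₀] using hdv)).resolve_right hv₁⟩
  · have ht₀ : t₀ ≠ 0 := by
      rintro rfl
      obtain rfl : t₁ = 0 := pow_eq_zero_iff two_ne_zero |>.1 (by linear_combination hQt)
      have ht₂ : t₂ ≠ 0 := fun ht₂ => ht (by simp [ht₂])
      exact mul_ne_zero hv₂ ht₂ (by linear_combination hvt)
    -- `v^⊥ ∩ w^⊥ = F·t` for `w = (-t₁, t₀, 0)`
    refine ⟨(-t₁, t₀, 0), fun ⟨d₀, d₁, d₂⟩ hdv hdw => ?_⟩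
    simp only at hdv hdw ⊢
    have key : v₂ * t₀ ^ 2 * (d₁ ^ 2 - d₀ * d₂) = 0 := by
      linear_combination (v₂ * (t₀ * d₁ + t₁ * d₀) + v₁ * t₀ * d₀) * hdw - t₀ ^ 2 * d₀ * hdv +
        v₂ * d₀ ^ 2 * hQt + t₀ * d₀ ^ 2 * hvt
    exact (mul_eq_zero.1 key).resolve_left (mul_ne_zero hv₂ (pow_ne_zero 2 ht₀))

lemma card_filter_dot3_eq_le [Fintype F] [DecidableEq F] {U : Finset (F × F × F)}
    (hU : NoDetermine U) {v : F × F × F} (hv : v ≠ 0) (hmeet : MeetsConic v) (a : F) :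
    #{u ∈ U | dot3 u v = a} ≤ Fintype.card F := by
  obtain ⟨w, hw⟩ := hmeet.exists_forall_quadQ_eq_zero hv
  refine (card_le_card_of_injOn (dot3 · w) (fun _ _ => mem_univ _) ?_).trans_eq card_univ
  intro u hu u' hu' huw
  simp only [coe_filter, Set.mem_ofPred_eq] at hu hu'
  by_contra hne
  refine hU u hu.1 u' hu'.1 hne (hw _ ?_ ?_)
  · rw [dot3_sub_left, hu.2, hu'.2, sub_self]
  · rw [dot3_sub_left]; exact sub_eq_zero.2 huw

end Conic

section FiniteField

variable {F : Type*} [Field F] [Fintype F]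

lemma X_pow_card_sub_X_eq_prod_X_add_C :
    (X ^ Fintype.card F - X : F[X]) = ∏ a : F, (X + C a) := by
  have hmonic : (X ^ Fintype.card F - X : F[X]).Monic :=
    monic_X_pow_sub (by rw [degree_X]; exact_mod_cast Fintype.one_lt_card)
  have hroots := FiniteField.roots_X_pow_card_sub_X F
  rw [← prod_multiset_X_sub_C_of_monic_of_roots_card_eq hmonic (by
    rw [hroots, FiniteField.X_pow_card_sub_X_natDegree_eq F Fintype.one_lt_card]; rfl), hroots]
  exact Fintype.prod_equiv (Equiv.neg F) _ _ fun a => by simp [sub_eq_add_neg]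

lemma prod_X_add_C_dvd_X_pow_card_sub_X_pow [DecidableEq F] {ι : Type*} (s : Finset ι)
    (f : ι → F) {n : ℕ} (hf : ∀ a, #{i ∈ s | f i = a} ≤ n) :
    ∏ i ∈ s, (X + C (f i)) ∣ (X ^ Fintype.card F - X) ^ n :=
  calc ∏ i ∈ s, (X + C (f i))
      = ∏ a, (X + C a) ^ #{i ∈ s | f i = a} := by
        simp only [← prod_const, prod_fiberwise' s f (fun a => X + C a)]
    _ ∣ ∏ a, (X + C a) ^ n := prod_dvd_prod_of_dvd _ _ fun a _ => pow_dvd_pow _ (hf a)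
    _ = (X ^ Fintype.card F - X) ^ n := by rw [prod_pow, X_pow_card_sub_X_eq_prod_X_add_C]

end FiniteField

open Polynomial in
theorem stmt_1_general
    {F : Type*} [Field F] [Fintype F] [DecidableEq F]
    (U : Finset (F × F × F))
    (hU : NoDetermine U)
    (v : F × F × F) (hv : v ≠ 0) (hmeet : MeetsConic v) :
    (∏ u ∈ U, (X + C (dot3 u v))) ∣ (X ^ Fintype.card F - X) ^ Fintype.card F :=
  prod_X_add_C_dvd_X_pow_card_sub_X_pow U (dot3 · v) (card_filter_dot3_eq_le hU hv hmeet)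

open Polynomial in
theorem stmt_1 {p h : ℕ} (hp : p.Prime) (hodd : Odd p) (hh : 1 ≤ h)
    {F : Type*} [Field F] [Fintype F] [DecidableEq F]
    (hcard : Fintype.card F = p ^ h)
    (U : Finset (F × F × F))
    (hUcard : U.card = Fintype.card F ^ 2 - 2)
    (hU : NoDetermine U)
    (v : F × F × F) (hv : v ≠ 0) (hmeet : MeetsConic v) :
    (∏ u ∈ U, (X + C (dot3 u v))) ∣ (X ^ Fintype.card F - X) ^ Fintype.card F :=
  stmt_1_general U hU v hv hmeet
end

section
/- Let U ⊆ F_q³ be a set of q² − 2 points that does not determine the points of C, with ∑_{u∈U} u = (0,0,0). If there exists v = (A,B,C') ∈ F_q³ such that σ₂(Y,Z,W) = (AY + BZ + C'W)² in F_q[Y,Z,W], then the set U* = U ∪ {v, −v} has cardinality q² (in particular v ≠ 0 and v, −v ∉ U) and U* does not determine the points of C. -/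
/-- The linear form `u₀Y + u₁Z + u₂W` in `F[Y,Z,W]` associated to `u ∈ F³`. -/
noncomputable def linForm {F : Type*} [Field F] (u : F × F × F) : MvPolynomial (Fin 3) F :=
  MvPolynomial.C u.1 * MvPolynomial.X 0 + MvPolynomial.C u.2.1 * MvPolynomial.X 1 +
    MvPolynomial.C u.2.2 * MvPolynomial.X 2

/-- `σ_i(Y,Z,W)`: the `i`-th elementary symmetric polynomial of the multiset of linear
forms `{u₀Y + u₁Z + u₂W : u ∈ U}`, as a polynomial in `F[Y,Z,W]`. -/
noncomputable def sigmaPoly {F : Type*} [Field F] (U : Finset (F × F × F)) (i : ℕ) :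
    MvPolynomial (Fin 3) F :=
  (U.val.map linForm).esymm i

/-!
Fix an isotropic vector `z` and linear forms `x₁, x₂` whose common kernel is the line through
`z`. The projection `ψ u = (u·x₁, u·x₂)` to `F²` is injective on `U`, since `U` determines no
point of `C`; so `ψ(U)` misses exactly two points of `F²`. Because `σ₁ = 0` and `σ₂ = (v·x)²`,
Newton's identity gives `∑_{u ∈ U} L(ψ u)² = -2 L(ψ v)²` for every linear form `L` on `F²`.
The power sums `∑ P` and `∑ L(P)²` over all of `F²` vanish, so the two missing points are `m, -m`
with `L(m)² = L(ψ v)²` for all `L`, i.e. they are `ψ v` and `-ψ v`. Hence `ψ` is injective on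
`U ∪ {v, -v}` for every isotropic direction, which is the claim.
-/

open Finset

theorem map_multiset_esymm {R S : Type*} [CommSemiring R] [CommSemiring S] (f : R →+* S)
    (s : Multiset R) (n : ℕ) : f (s.esymm n) = (s.map f).esymm n := by
  simp only [Multiset.esymm, Multiset.powersetCard_map, Multiset.map_map, map_multiset_sum]
  congr 1
  exact Multiset.map_congr rfl fun t _ => map_multiset_prod f t

theorem Multiset.esymm_cons_two {R : Type*} [CommSemiring R] (a : R) (s : Multiset R) :
    (a ::ₘ s).esymm 2 = s.esymm 2 + a * s.sum := by
  simp only [Multiset.esymm, Multiset.powersetCard_cons, Multiset.map_add, Multiset.sum_add,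
    Multiset.powersetCard_one, Multiset.map_map, Function.comp_def, Multiset.prod_cons,
    Multiset.prod_singleton]
  rw [Multiset.sum_map_mul_left, Multiset.map_id']

theorem Multiset.sum_sq_eq_two_mul_esymm_two_add {R : Type*} [CommSemiring R] (s : Multiset R) :
    s.sum ^ 2 = 2 * s.esymm 2 + (s.map (· ^ 2)).sum := by
  induction s using Multiset.induction with
  | empty => simp [Multiset.esymm, Multiset.powersetCard_zero_right]
  | cons a s ih =>
    rw [Multiset.sum_cons, add_sq', ih, Multiset.esymm_cons_two, Multiset.map_cons,
      Multiset.sum_cons]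
    ring

theorem FiniteField.sum_comp_linear_eq_zero {F : Type*} [Field F] [Fintype F] (g : F → F)
    (c₁ c₂ : F) : ∑ P : F × F, g (c₁ * P.1 + c₂ * P.2) = 0 := by
  rw [Fintype.sum_prod_type]
  by_cases hc : c₂ = 0
  · simp [hc]
  · have hinner (a : F) : ∑ b : F, g (c₁ * a + c₂ * b) = ∑ t : F, g t :=
      Fintype.sum_bijective _ ((Equiv.addLeft _).bijective.comp (Equiv.mulLeft₀ c₂ hc).bijective)
        _ _ fun _ => rfl
    simp [hinner]

theorem Prod.eq_or_eq_neg_of_forall_sq_eq {K : Type*} [Field K] {a b : K × K}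
    (h : ∀ c₁ c₂ : K, (c₁ * a.1 + c₂ * a.2) ^ 2 = (c₁ * b.1 + c₂ * b.2) ^ 2) :
    a = b ∨ a = -b := by
  have h1 := h 1 0
  have h2 := h 0 1
  have h3 := h 1 1
  simp only [one_mul, zero_mul, add_zero, zero_add] at h1 h2 h3
  rw [Prod.ext_iff, Prod.ext_iff]
  simp only [Prod.fst_neg, Prod.snd_neg]
  grind

theorem FiniteField.sum_univ_prod_eq_zero {F : Type*} [Field F] [Fintype F] :
    ∑ P : F × F, P = 0 := by
  ext
  · simpa [Prod.fst_sum] using FiniteField.sum_comp_linear_eq_zero (F := F) id 1 0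
  · simpa [Prod.snd_sum] using FiniteField.sum_comp_linear_eq_zero (F := F) id 0 1

theorem two_le_card_sq (α : Type*) [Fintype α] [Nontrivial α] : 2 ≤ Fintype.card α ^ 2 := by
  nlinarith [Fintype.one_lt_card (α := α)]

section PlaneComplement
variable {F : Type*} [Field F] [Fintype F] [DecidableEq F]

theorem notMem_and_neg_notMem_of_sum_sq (h2 : (2 : F) ≠ 0) {W : Finset (F × F)}
    (hW : #W = Fintype.card F ^ 2 - 2) (hsum : ∑ P ∈ W, P = 0) {w : F × F}
    (hsq : ∀ c₁ c₂ : F, ∑ P ∈ W, (c₁ * P.1 + c₂ * P.2) ^ 2 = -(2 * (c₁ * w.1 + c₂ * w.2) ^ 2)) :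
    w ∉ W ∧ -w ∉ W ∧ w ≠ -w := by
  have hq := two_le_card_sq F
  obtain ⟨m₁, m₂, hm, hM⟩ : ∃ m₁ m₂, m₁ ≠ m₂ ∧ univ \ W = {m₁, m₂} := by
    rw [← card_eq_two, card_sdiff_of_subset (subset_univ W), card_univ, Fintype.card_prod, ← sq,
      hW]
    omega
  have hsplit {M : Type _} [AddCommGroup M] (g : F × F → M) :
      ∑ P ∈ W, g P = ∑ P, g P - g m₁ - g m₂ := by
    rw [← sum_sdiff (subset_univ W), hM, sum_pair hm]; abel
  have hm₂ : m₂ = -m₁ := by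
    have := hsplit id
    simp only [id, hsum, FiniteField.sum_univ_prod_eq_zero] at this
    linear_combination this
  have hw : w = m₁ ∨ w = -m₁ := by
    refine Prod.eq_or_eq_neg_of_forall_sq_eq fun c₁ c₂ => mul_left_cancel₀ h2 ?_
    have := hsplit fun P => (c₁ * P.1 + c₂ * P.2) ^ 2
    rw [hsq, FiniteField.sum_comp_linear_eq_zero (· ^ 2), hm₂] at this
    simp only [Prod.fst_neg, Prod.snd_neg] at this
    linear_combination -this
  have hmem : w ∈ univ \ W ∧ -w ∈ univ \ W := by
    rw [hM]; rcases hw with rfl | rfl <;> simp [hm₂]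
  refine ⟨(mem_sdiff.1 hmem.1).2, (mem_sdiff.1 hmem.2).2, ?_⟩
  rcases hw with rfl | rfl
  · rwa [← hm₂]
  · rw [neg_neg, ← hm₂]; exact hm.symm

end PlaneComplement

section Conic
variable {F : Type*} [Field F]

def dotRight (x : F × F × F) : (F × F × F) →ₗ[F] F where
  toFun u := dot3 u x
  map_add' _ _ := by simp only [dot3, Prod.fst_add, Prod.snd_add]; ring
  map_smul' _ _ := by
    simp only [dot3, Prod.smul_fst, Prod.smul_snd, smul_eq_mul, RingHom.id_apply]; ring

def dotPair (x₁ x₂ : F × F × F) : (F × F × F) →ₗ[F] F × F :=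
  (dotRight x₁).prod (dotRight x₂)

theorem dotRight_apply (x u : F × F × F) : dotRight x u = dot3 u x := rfl

theorem dotPair_apply (x₁ x₂ u : F × F × F) : dotPair x₁ x₂ u = (dot3 u x₁, dot3 u x₂) := rfl

theorem dot3_smul_add_smul (u x₁ x₂ : F × F × F) (c₁ c₂ : F) :
    dot3 u (c₁ • x₁ + c₂ • x₂) = c₁ * dot3 u x₁ + c₂ * dot3 u x₂ := by
  simp only [dot3, Prod.smul_fst, Prod.smul_snd, Prod.fst_add, Prod.snd_add, smul_eq_mul]
  ring

theorem exists_dotPair_of_quadQ_eq_zero {z : F × F × F} (hz : quadQ z = 0) :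
    ∃ x₁ x₂ : F × F × F, dotPair x₁ x₂ z = 0 ∧ ∀ w, dotPair x₁ x₂ w = 0 → quadQ w = 0 := by
  simp only [dotPair_apply, Prod.mk_eq_zero, dot3, quadQ] at hz ⊢
  by_cases h0 : z.1 = 0
  · have h1 : z.2.1 = 0 := by simpa [h0] using hz
    refine ⟨(1, 0, 0), (0, 1, 0), by simp [h0, h1], fun w hw => ?_⟩
    simp only [mul_one, mul_zero, add_zero, zero_add] at hw
    simp [hw.1, hw.2]
  · obtain ⟨s, hs⟩ : ∃ s, z.2.1 = s * z.1 := ⟨z.2.1 / z.1, (div_mul_cancel₀ _ h0).symm⟩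
    have hs₂ : z.2.2 = s ^ 2 * z.1 :=
      mul_left_cancel₀ h0 (by linear_combination -hz + (z.2.1 + s * z.1) * hs)
    refine ⟨(-s, 1, 0), (-s ^ 2, 0, 1), ⟨?_, ?_⟩, fun w hw => ?_⟩
    · linear_combination hs
    · linear_combination hs₂
    · linear_combination (w.2.1 + s * w.1) * hw.1 - w.1 * hw.2

theorem NoDetermine.injOn_dotPair {U : Finset (F × F × F)} (hU : NoDetermine U)
    {x₁ x₂ : F × F × F} (hker : ∀ w, dotPair x₁ x₂ w = 0 → quadQ w = 0) :
    Set.InjOn (dotPair x₁ x₂) U := by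
  intro a ha b hb hab
  by_contra hne
  exact hU a ha b hb hne (hker _ (by rw [map_sub, hab, sub_self]))

end Conic

section SymmetricFunctions
variable {F : Type*} [Field F]

theorem eval_linForm (u x : F × F × F) :
    MvPolynomial.eval ![x.1, x.2.1, x.2.2] (linForm u) = dot3 u x := by
  simp [linForm, dot3]

theorem eval_sigmaPoly (U : Finset (F × F × F)) (i : ℕ) (x : F × F × F) :
    MvPolynomial.eval ![x.1, x.2.1, x.2.2] (sigmaPoly U i) = sigmaU U x i := by
  rw [sigmaPoly, map_multiset_esymm, Multiset.map_map]
  simp only [Function.comp_def, eval_linForm, sigmaU]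

theorem sum_dot3_sq_eq_of_sigmaPoly_two_eq {U : Finset (F × F × F)} (hsum : ∑ u ∈ U, u = 0)
    {v : F × F × F} (hsq : sigmaPoly U 2 = linForm v ^ 2) (x : F × F × F) :
    ∑ u ∈ U, dot3 u x ^ 2 = -(2 * dot3 v x ^ 2) := by
  have hσ : sigmaU U x 2 = dot3 v x ^ 2 := by
    simpa [eval_sigmaPoly, eval_linForm] using
      congrArg (MvPolynomial.eval ![x.1, x.2.1, x.2.2]) hsq
  have hσ₁ : ∑ u ∈ U, dot3 u x = 0 := by
    rw [← map_zero (dotRight x), ← hsum, map_sum]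
    rfl
  have := Multiset.sum_sq_eq_two_mul_esymm_two_add (U.val.map (dot3 · x))
  rw [Multiset.map_map, ← sigmaU, ← sum_eq_multiset_sum, ← sum_eq_multiset_sum, hσ₁, hσ] at this
  simp only [Function.comp_def] at this
  linear_combination -this

end SymmetricFunctions

section Projection
variable {F : Type*} [Field F] [Fintype F] [DecidableEq F] {U : Finset (F × F × F)}
  {v x₁ x₂ : F × F × F}

theorem dotPair_notMem_image (h2 : (2 : F) ≠ 0) (hUcard : #U = Fintype.card F ^ 2 - 2)
    (hU : NoDetermine U) (hsum : ∑ u ∈ U, u = 0)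
    (hsq : ∀ x, ∑ u ∈ U, dot3 u x ^ 2 = -(2 * dot3 v x ^ 2))
    (hker : ∀ w, dotPair x₁ x₂ w = 0 → quadQ w = 0) :
    dotPair x₁ x₂ v ∉ U.image (dotPair x₁ x₂) ∧ dotPair x₁ x₂ (-v) ∉ U.image (dotPair x₁ x₂) ∧
      dotPair x₁ x₂ v ≠ dotPair x₁ x₂ (-v) := by
  have hinj := hU.injOn_dotPair hker
  rw [map_neg]
  refine notMem_and_neg_notMem_of_sum_sq h2 ?_ ?_ fun c₁ c₂ => ?_
  · rw [card_image_of_injOn hinj, hUcard]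
  · rw [sum_image hinj, ← map_sum, hsum, map_zero]
  · simp only [sum_image hinj, dotPair_apply, ← dot3_smul_add_smul]
    exact hsq _

theorem notMem_and_neg_notMem_of_sum_dot3_sq (h2 : (2 : F) ≠ 0)
    (hUcard : #U = Fintype.card F ^ 2 - 2) (hU : NoDetermine U) (hsum : ∑ u ∈ U, u = 0)
    (hsq : ∀ x, ∑ u ∈ U, dot3 u x ^ 2 = -(2 * dot3 v x ^ 2)) :
    v ∉ U ∧ -v ∉ U ∧ v ≠ -v := by
  obtain ⟨x₁, x₂, -, hker⟩ :=
    exists_dotPair_of_quadQ_eq_zero (z := ((1, 0, 0) : F × F × F)) (by simp [quadQ])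
  obtain ⟨hv, hnv, hne⟩ := dotPair_notMem_image h2 hUcard hU hsum hsq hker
  exact ⟨fun h => hv (mem_image_of_mem _ h), fun h => hnv (mem_image_of_mem _ h),
    fun h => hne (congrArg _ h)⟩

theorem injOn_dotPair_insert_insert_neg (h2 : (2 : F) ≠ 0)
    (hUcard : #U = Fintype.card F ^ 2 - 2) (hU : NoDetermine U) (hsum : ∑ u ∈ U, u = 0)
    (hsq : ∀ x, ∑ u ∈ U, dot3 u x ^ 2 = -(2 * dot3 v x ^ 2))
    (hker : ∀ w, dotPair x₁ x₂ w = 0 → quadQ w = 0) :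
    Set.InjOn (dotPair x₁ x₂) (insert v (insert (-v) U) : Finset _) := by
  obtain ⟨hv, hnv, hne⟩ := dotPair_notMem_image h2 hUcard hU hsum hsq hker
  obtain ⟨hvU, hnvU, hvnv⟩ := notMem_and_neg_notMem_of_sum_dot3_sq h2 hUcard hU hsum hsq
  rw [coe_insert, coe_insert, Set.injOn_insert (by simp [hvnv, hvU]), Set.injOn_insert hnvU]
  refine ⟨⟨hU.injOn_dotPair hker, by simpa using hnv⟩, ?_⟩
  rw [Set.image_insert_eq, Set.mem_insert_iff, not_or, ← coe_image, mem_coe]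
  exact ⟨hne, hv⟩

end Projection

theorem stmt_10_general {p h : ℕ} (hodd : Odd p)
    {F : Type*} [Field F] [Fintype F] [DecidableEq F]
    (hcard : Fintype.card F = p ^ h)
    (U : Finset (F × F × F))
    (hUcard : U.card = Fintype.card F ^ 2 - 2)
    (hU : NoDetermine U)
    (hsum : ∑ u ∈ U, u = 0)
    (v : F × F × F)
    (hsq : sigmaPoly U 2 = linForm v ^ 2) :
    (insert v (insert (-v) U)).card = Fintype.card F ^ 2 ∧
      NoDetermine (insert v (insert (-v) U)) := by
  have h2 : (2 : F) ≠ 0 := Ring.two_ne_zero fun hchar => by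
    simpa [hcard, Nat.odd_iff.1 (hodd.pow (n := h))] using
      FiniteField.even_card_of_char_two hchar
  have hsq' := sum_dot3_sq_eq_of_sigmaPoly_two_eq hsum hsq
  obtain ⟨hvU, hnvU, hvnv⟩ := notMem_and_neg_notMem_of_sum_dot3_sq h2 hUcard hU hsum hsq'
  refine ⟨?_, fun a ha b hb hab hQ => ?_⟩
  · rw [card_insert_of_notMem (by simp [hvnv, hvU]), card_insert_of_notMem hnvU, hUcard]
    have := two_le_card_sq F
    omega
  · obtain ⟨x₁, x₂, hz, hker⟩ := exists_dotPair_of_quadQ_eq_zero hQ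
    exact hab (injOn_dotPair_insert_insert_neg h2 hUcard hU hsum hsq' hker ha hb
      (sub_eq_zero.1 (by rwa [← map_sub])))

theorem stmt_10 {p h : ℕ} (hp : p.Prime) (hodd : Odd p) (hh : 1 ≤ h)
    {F : Type*} [Field F] [Fintype F] [DecidableEq F]
    (hcard : Fintype.card F = p ^ h)
    (U : Finset (F × F × F))
    (hUcard : U.card = Fintype.card F ^ 2 - 2)
    (hU : NoDetermine U)
    (hsum : ∑ u ∈ U, u = 0)
    (v : F × F × F)
    (hsq : sigmaPoly U 2 = linForm v ^ 2) :
    (insert v (insert (-v) U)).card = Fintype.card F ^ 2 ∧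
      NoDetermine (insert v (insert (-v) U)) :=
  stmt_10_general hodd hcard U hUcard hU hsum v hsq
end
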